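/- Let u:ℤ³→ℝ satisfy ∑_x(|∇u|²(x)+u(x)²)<∞, and let s,t>0. Then ∑_{x∈ℤ³}∇(su⁺+tu⁻)∇(su⁺)(x)=∑_{x∈ℤ³}|∇(su⁺)|²(x)−(st/2)·K_V(u), and similarly ∑_{x∈ℤ³}∇(su⁺+tu⁻)∇(tu⁻)(x)=∑_{x∈ℤ³}|∇(tu⁻)|²(x)−(st/2)·K_V(u), where all sums converge absolutely. -/
import Mathlib


open scoped BigOperators
open Filter

namespace DiscreteKirchhoff

/-- Vertices of the lattice graph ℤ³. -/
abbrev V := Fin 3 → ℤ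

/-- Adjacency on ℤ³: x ∼ y iff ∑ᵢ |xᵢ - yᵢ| = 1. -/
def adj (x y : V) : Prop := (∑ i, |x i - y i|) = 1

instance (x y : V) : Decidable (adj x y) :=
  inferInstanceAs (Decidable ((∑ i, |x i - y i|) = 1))

/-- Graph Laplacian: Δu(x) = ∑_{y∼x} (u(y) - u(x)). -/
noncomputable def lap (u : V → ℝ) (x : V) : ℝ :=
  ∑' y : V, if adj x y then u y - u x else 0

/-- Gradient form: ∇u∇v(x) = (1/2) ∑_{y∼x} (u(y)-u(x))(v(y)-v(x)). -/
noncomputable def gradForm (u v : V → ℝ) (x : V) : ℝ :=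
  (1/2) * ∑' y : V, if adj x y then (u y - u x) * (v y - v x) else 0

/-- |∇u|²(x). -/
noncomputable def gradSq (u : V → ℝ) (x : V) : ℝ := gradForm u u x

/-- Positive part u⁺ = max(u,0). -/
noncomputable def pos (u : V → ℝ) : V → ℝ := fun x => max (u x) 0

/-- Negative part u⁻ = min(u,0). -/
noncomputable def neg (u : V → ℝ) : V → ℝ := fun x => min (u x) 0

/-- K_V(u) = ∑_x ∑_{y∼x} [u⁺(x)u⁻(y) + u⁻(x)u⁺(y)]. -/
noncomputable def KV (u : V → ℝ) : ℝ :=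
  ∑' x : V, ∑' y : V, if adj x y then pos u x * neg u y + neg u x * pos u y else 0

/-- |t|^p log t², taken to be 0 at t = 0. -/
noncomputable def logTerm (p t : ℝ) : ℝ :=
  if t = 0 then 0 else |t| ^ p * Real.log (t ^ 2)

/-- |t|^{p-2} t log t², taken to be 0 at t = 0. -/
noncomputable def nlTerm (p t : ℝ) : ℝ :=
  if t = 0 then 0 else |t| ^ (p - 2) * t * Real.log (t ^ 2)

/-- Membership in the space ℋ_λ (independent of λ > 0). -/
def memH (h u : V → ℝ) : Prop :=
  Summable (fun x => gradSq u x + (u x) ^ 2) ∧ Summable (fun x => h x * (u x) ^ 2)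

/-- h_λ(x) = λ h(x) + 1. -/
noncomputable def hl (lam : ℝ) (h : V → ℝ) (x : V) : ℝ := lam * h x + 1

/-- Squared norm in ℋ_λ. -/
noncomputable def normHlamSq (a lam : ℝ) (h u : V → ℝ) : ℝ :=
  ∑' x : V, (a * gradSq u x + hl lam h x * (u x) ^ 2)

/-- Squared H¹ norm. -/
noncomputable def normH1Sq (u : V → ℝ) : ℝ :=
  ∑' x : V, (gradSq u x + (u x) ^ 2)

/-- Inner product in ℋ_λ. -/
noncomputable def innerHlam (a lam : ℝ) (h u v : V → ℝ) : ℝ :=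
  ∑' x : V, (a * gradForm u v x + hl lam h x * u x * v x)

/-- The energy functional J_λ. -/
noncomputable def Jlam (a b p lam : ℝ) (h u : V → ℝ) : ℝ :=
  (1/2) * normHlamSq a lam h u
  + (b/4) * (∑' x : V, gradSq u x) ^ 2
  + (2/p^2) * ∑' x : V, |u x| ^ p
  - (1/p) * ∑' x : V, logTerm p (u x)

/-- The pairing (J′_λ(u), φ). -/
noncomputable def Jp (a b p lam : ℝ) (h u φ : V → ℝ) : ℝ :=
  (∑' x : V, (a * gradForm u φ x + hl lam h x * u x * φ x))
  + b * (∑' x : V, gradSq u x) * (∑' x : V, gradForm u φ x)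
  - ∑' x : V, nlTerm p (u x) * φ x

/-- The Nehari manifold N_λ. -/
def NSet (a b p lam : ℝ) (h : V → ℝ) : Set (V → ℝ) :=
  {u | memH h u ∧ u ≠ 0 ∧ Jp a b p lam h u u = 0}

/-- The sign-changing Nehari set M_λ. -/
def MSet (a b p lam : ℝ) (h : V → ℝ) : Set (V → ℝ) :=
  {u | memH h u ∧ pos u ≠ 0 ∧ neg u ≠ 0 ∧
       Jp a b p lam h u (pos u) = 0 ∧ Jp a b p lam h u (neg u) = 0}

/-- c_λ = inf_{N_λ} J_λ. -/
noncomputable def cLam (a b p lam : ℝ) (h : V → ℝ) : ℝ :=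
  sInf (Jlam a b p lam h '' NSet a b p lam h)

/-- m_λ = inf_{M_λ} J_λ. -/
noncomputable def mLam (a b p lam : ℝ) (h : V → ℝ) : ℝ :=
  sInf (Jlam a b p lam h '' MSet a b p lam h)

/-- Graph-connectedness of a subset of ℤ³. -/
def connectedIn (S : Set V) : Prop :=
  ∀ x ∈ S, ∀ y ∈ S, Relation.ReflTransGen (fun z w => adj z w ∧ w ∈ S) x y

/-- Hypothesis (h₁): h ≥ 0 and Ω = {h = 0} is nonempty, connected and finite. -/
def hypH1 (h : V → ℝ) : Prop :=
  (∀ x, 0 ≤ h x) ∧ {x | h x = 0}.Nonempty ∧ connectedIn {x | h x = 0} ∧ {x | h x = 0}.Finite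

/-- Hypothesis (h₂): the sublevel set {h < M} is finite for some M > 0. -/
def hypH2 (h : V → ℝ) : Prop :=
  ∃ M > 0, {x | h x < M}.Finite

/-- u solves the discrete logarithmic Kirchhoff equation pointwise on ℤ³. -/
def solvesEq (a b p lam : ℝ) (h u : V → ℝ) : Prop :=
  ∀ x : V, -(a + b * ∑' y : V, gradSq u y) * lap u x + hl lam h x * u x = nlTerm p (u x)

/-- Vertex boundary of a subset of ℤ³. -/
def bdry (S : Set V) : Set V := {y | y ∉ S ∧ ∃ x ∈ S, adj x y}

/-- ℋ¹₀(Ω): functions vanishing outside Ω. -/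
def H10 (S : Set V) : Set (V → ℝ) := {u | ∀ x, x ∉ S → u x = 0}

/-- The energy functional J_Ω. -/
noncomputable def JOm (a b p : ℝ) (S : Set V) (u : V → ℝ) : ℝ :=
  (1/2) * ∑' x : V, (S ∪ bdry S).indicator (fun x => a * gradSq u x) x
  + (1/2) * ∑' x : V, S.indicator (fun x => (u x) ^ 2) x
  + (b/4) * (∑' x : V, (S ∪ bdry S).indicator (gradSq u) x) ^ 2
  + (2/p^2) * ∑' x : V, S.indicator (fun x => |u x| ^ p) x
  - (1/p) * ∑' x : V, S.indicator (fun x => logTerm p (u x)) x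

/-- The pairing (J′_Ω(u), φ). -/
noncomputable def JOmp (a b p : ℝ) (S : Set V) (u φ : V → ℝ) : ℝ :=
  (∑' x : V, (S ∪ bdry S).indicator (fun x => a * gradForm u φ x) x)
  + (∑' x : V, S.indicator (fun x => u x * φ x) x)
  + b * (∑' x : V, (S ∪ bdry S).indicator (gradSq u) x)
      * (∑' x : V, (S ∪ bdry S).indicator (gradForm u φ) x)
  - ∑' x : V, S.indicator (fun x => nlTerm p (u x) * φ x) x

/-- The Nehari manifold N_Ω. -/
def NOm (a b p : ℝ) (S : Set V) : Set (V → ℝ) :=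
  {u | u ∈ H10 S ∧ u ≠ 0 ∧ JOmp a b p S u u = 0}

/-- The sign-changing Nehari set M_Ω. -/
def MOm (a b p : ℝ) (S : Set V) : Set (V → ℝ) :=
  {u | u ∈ H10 S ∧ pos u ≠ 0 ∧ neg u ≠ 0 ∧
       JOmp a b p S u (pos u) = 0 ∧ JOmp a b p S u (neg u) = 0}

/-- c_Ω. -/
noncomputable def cOm (a b p : ℝ) (S : Set V) : ℝ :=
  sInf (JOm a b p S '' NOm a b p S)

/-- m_Ω. -/
noncomputable def mOm (a b p : ℝ) (S : Set V) : ℝ :=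
  sInf (JOm a b p S '' MOm a b p S)

/-- u solves the limiting equation pointwise on Ω. -/
def solvesEqOm (a b p : ℝ) (S : Set V) (u : V → ℝ) : Prop :=
  ∀ x ∈ S, -(a + b * ∑' y : V, (S ∪ bdry S).indicator (gradSq u) y) * lap u x + u x
      = nlTerm p (u x)


lemma adj_finite (x : V) : {y : V | adj x y}.Finite := by
  apply Set.Finite.subset (Set.finite_Icc (fun i => x i - 1) (fun i => x i + 1))
  intro y hy
  simp only [Set.mem_Icc, Pi.le_def]
  have h : ∀ i, |x i - y i| ≤ 1 := by
    intro i
    calc |x i - y i| ≤ ∑ j, |x j - y j| :=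
          Finset.single_le_sum (f := fun j => |x j - y j|)
            (fun j _ => abs_nonneg _) (Finset.mem_univ i)
      _ = 1 := hy
  constructor <;> intro i <;> have := abs_le.mp (h i) <;> omega
lemma summable_adj (x : V) (g : V → ℝ) :
    Summable (fun y => if adj x y then g y else 0) := by
  classical
  apply summable_of_ne_finset_zero (s := (adj_finite x).toFinset)
  intro y hy
  rw [Set.Finite.mem_toFinset, Set.mem_setOf_eq] at hy
  simp [hy]

lemma pos_mul_neg (u : V → ℝ) (y : V) : pos u y * neg u y = 0 := by
  rcases le_total (u y) 0 with h | h
  · simp [pos, max_eq_right h]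
  · simp [neg, min_eq_right h]

/-- auxiliary K_V summand -/
noncomputable def Kx (u : V → ℝ) (x : V) : ℝ :=
  ∑' y : V, if adj x y then pos u x * neg u y + neg u x * pos u y else 0

lemma gradSq_nonneg (f : V → ℝ) (x : V) : 0 ≤ gradSq f x := by
  unfold gradSq gradForm
  have : 0 ≤ ∑' y : V, if adj x y then (f y - f x) * (f y - f x) else 0 :=
    tsum_nonneg fun y => by split_ifs with h; exacts [mul_self_nonneg _, le_rfl]
  linarith

lemma gradSq_smul (c : ℝ) (f : V → ℝ) (x : V) :
    gradSq (fun y => c * f y) x = c ^ 2 * gradSq f x := by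
  unfold gradSq gradForm
  have h : ∀ y : V, (if adj x y then (c * f y - c * f x) * (c * f y - c * f x) else 0)
      = c ^ 2 * (if adj x y then (f y - f x) * (f y - f x) else 0) := fun y => by
    split_ifs <;> ring
  rw [tsum_congr h, tsum_mul_left]; ring

lemma abs_max_sub (a b : ℝ) : |max a 0 - max b 0| ≤ |a - b| :=
  abs_max_sub_max_le_abs a b 0

lemma abs_min_sub (a b : ℝ) : |min a 0 - min b 0| ≤ |a - b| := by
  simpa using abs_min_sub_min_le_max a 0 b 0

lemma gradSq_le (u : V → ℝ) (f : ℝ → ℝ) (hf : ∀ a b : ℝ, |f a - f b| ≤ |a - b|)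
    (x : V) : gradSq (fun y => f (u y)) x ≤ gradSq u x := by
  unfold gradSq gradForm
  have h : ∀ y : V, (if adj x y then (f (u y) - f (u x)) * (f (u y) - f (u x)) else 0)
      ≤ (if adj x y then (u y - u x) * (u y - u x) else 0) := by
    intro y
    split_ifs with h
    · have h1 := hf (u y) (u x)
      have h2 := mul_self_le_mul_self (abs_nonneg (f (u y) - f (u x))) h1
      simpa only [abs_mul_abs_self] using h2
    · exact le_rfl
  have := Summable.tsum_le_tsum h (summable_adj x _) (summable_adj x _)
  linarith

lemma gradForm_pos_decomp (u : V → ℝ) (s t : ℝ) (x : V) :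
    gradForm (fun y => s * pos u y + t * neg u y) (fun y => s * pos u y) x
      = s ^ 2 * gradSq (pos u) x - (s * t / 2) * Kx u x := by
  unfold gradForm gradSq Kx
  have h : ∀ y : V,
      (if adj x y then ((s * pos u y + t * neg u y) - (s * pos u x + t * neg u x)) *
          (s * pos u y - s * pos u x) else 0)
      = s ^ 2 * (if adj x y then (pos u y - pos u x) * (pos u y - pos u x) else 0)
        + (-(s * t)) * (if adj x y then pos u x * neg u y + neg u x * pos u y else 0) := by
    intro y
    split_ifs with hadj
    · linear_combination s * t * pos_mul_neg u y + s * t * pos_mul_neg u x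
    · ring
  rw [tsum_congr h, Summable.tsum_add ((summable_adj x _).mul_left _) ((summable_adj x _).mul_left _),
    tsum_mul_left, tsum_mul_left]
  unfold gradForm
  ring

lemma gradForm_neg_decomp (u : V → ℝ) (s t : ℝ) (x : V) :
    gradForm (fun y => s * pos u y + t * neg u y) (fun y => t * neg u y) x
      = t ^ 2 * gradSq (neg u) x - (s * t / 2) * Kx u x := by
  unfold gradForm gradSq Kx
  have h : ∀ y : V,
      (if adj x y then ((s * pos u y + t * neg u y) - (s * pos u x + t * neg u x)) *
          (t * neg u y - t * neg u x) else 0)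
      = t ^ 2 * (if adj x y then (neg u y - neg u x) * (neg u y - neg u x) else 0)
        + (-(s * t)) * (if adj x y then pos u x * neg u y + neg u x * pos u y else 0) := by
    intro y
    split_ifs with hadj
    · linear_combination s * t * pos_mul_neg u y + s * t * pos_mul_neg u x
    · ring
  rw [tsum_congr h, Summable.tsum_add ((summable_adj x _).mul_left _) ((summable_adj x _).mul_left _),
    tsum_mul_left, tsum_mul_left]
  unfold gradForm
  ring

lemma abs_Kx_le (u : V → ℝ) (x : V) :
    |Kx u x| ≤ gradSq (pos u) x + gradSq (neg u) x := by
  have hb : ∀ y : V, |if adj x y then pos u x * neg u y + neg u x * pos u y else 0|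
      ≤ (1/2) * (if adj x y then (pos u y - pos u x) * (pos u y - pos u x) else 0)
        + (1/2) * (if adj x y then (neg u y - neg u x) * (neg u y - neg u x) else 0) := by
    intro y
    split_ifs with hadj
    · rw [abs_le]
      constructor <;> nlinarith [pos_mul_neg u y, pos_mul_neg u x,
        sq_nonneg ((pos u y - pos u x) + (neg u y - neg u x)),
        sq_nonneg ((pos u y - pos u x) - (neg u y - neg u x))]
    · simp
  have hsum1 : Summable (fun y => |if adj x y then pos u x * neg u y + neg u x * pos u y else 0|) :=
    (summable_adj x (fun y => pos u x * neg u y + neg u x * pos u y)).abs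
  have hsum2 : Summable (fun y : V =>
      (1/2) * (if adj x y then (pos u y - pos u x) * (pos u y - pos u x) else 0)
        + (1/2) * (if adj x y then (neg u y - neg u x) * (neg u y - neg u x) else 0)) :=
    ((summable_adj x _).mul_left _).add ((summable_adj x _).mul_left _)
  calc |Kx u x| ≤ ∑' y : V, |if adj x y then pos u x * neg u y + neg u x * pos u y else 0| := by
        have := norm_tsum_le_tsum_norm (f := fun y : V =>
          if adj x y then pos u x * neg u y + neg u x * pos u y else 0)
          (by simpa [Real.norm_eq_abs] using hsum1)
        simpa [Kx, Real.norm_eq_abs] using this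
    _ ≤ ∑' y : V, ((1/2) * (if adj x y then (pos u y - pos u x) * (pos u y - pos u x) else 0)
        + (1/2) * (if adj x y then (neg u y - neg u x) * (neg u y - neg u x) else 0)) :=
        Summable.tsum_le_tsum hb hsum1 hsum2
    _ = gradSq (pos u) x + gradSq (neg u) x := by
        rw [Summable.tsum_add ((summable_adj x _).mul_left _) ((summable_adj x _).mul_left _),
          tsum_mul_left, tsum_mul_left]
        unfold gradSq gradForm
        norm_num

lemma summable_gradSq_of (u : V → ℝ) (hu : Summable (fun x => gradSq u x + (u x) ^ 2)) :
    Summable (fun x => gradSq u x) :=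
  hu.of_nonneg_of_le (fun x => gradSq_nonneg u x)
    (fun x => by nlinarith [sq_nonneg (u x)])

lemma summable_gradSq_pos (u : V → ℝ) (hu : Summable (fun x => gradSq u x + (u x) ^ 2)) :
    Summable (fun x => gradSq (pos u) x) := by
  refine (summable_gradSq_of u hu).of_nonneg_of_le (fun x => gradSq_nonneg _ x) (fun x => ?_)
  exact gradSq_le u (fun a => max a 0) (fun a b => abs_max_sub a b) x

lemma summable_gradSq_neg (u : V → ℝ) (hu : Summable (fun x => gradSq u x + (u x) ^ 2)) :
    Summable (fun x => gradSq (neg u) x) := by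
  refine (summable_gradSq_of u hu).of_nonneg_of_le (fun x => gradSq_nonneg _ x) (fun x => ?_)
  exact gradSq_le u (fun a => min a 0) (fun a b => abs_min_sub a b) x

lemma summable_Kx (u : V → ℝ) (hu : Summable (fun x => gradSq u x + (u x) ^ 2)) :
    Summable (Kx u) := by
  rw [← summable_abs_iff]
  exact ((summable_gradSq_pos u hu).add (summable_gradSq_neg u hu)).of_nonneg_of_le
    (fun x => abs_nonneg _) (fun x => abs_Kx_le u x)


/-- cross gradient-form identities for su⁺ + tu⁻. -/
theorem stmt4 (u : V → ℝ) (hu : Summable (fun x => gradSq u x + (u x) ^ 2))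
    (s t : ℝ) (hs : 0 < s) (ht : 0 < t) :
    Summable (fun x =>
      gradForm (fun y => s * pos u y + t * neg u y) (fun y => s * pos u y) x) ∧
    Summable (fun x =>
      gradForm (fun y => s * pos u y + t * neg u y) (fun y => t * neg u y) x) ∧
    Summable (fun x => gradSq (fun y => s * pos u y) x) ∧
    Summable (fun x => gradSq (fun y => t * neg u y) x) ∧
    Summable (fun x : V =>
      ∑' y : V, if adj x y then pos u x * neg u y + neg u x * pos u y else 0) ∧
    (∑' x : V, gradForm (fun y => s * pos u y + t * neg u y) (fun y => s * pos u y) x)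
      = (∑' x : V, gradSq (fun y => s * pos u y) x) - (s * t / 2) * KV u ∧
    (∑' x : V, gradForm (fun y => s * pos u y + t * neg u y) (fun y => t * neg u y) x)
      = (∑' x : V, gradSq (fun y => t * neg u y) x) - (s * t / 2) * KV u := by
  have hGp := summable_gradSq_pos u hu
  have hGn := summable_gradSq_neg u hu
  have hK := summable_Kx u hu
  have hdp : ∀ x : V, gradForm (fun y => s * pos u y + t * neg u y)
      (fun y => s * pos u y) x = s ^ 2 * gradSq (pos u) x - (s * t / 2) * Kx u x :=
    gradForm_pos_decomp u s t
  have hdn : ∀ x : V, gradForm (fun y => s * pos u y + t * neg u y)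
      (fun y => t * neg u y) x = t ^ 2 * gradSq (neg u) x - (s * t / 2) * Kx u x :=
    gradForm_neg_decomp u s t
  have hsp : Summable (fun x => gradSq (fun y => s * pos u y) x) :=
    (hGp.mul_left (s ^ 2)).congr (fun x => (gradSq_smul s (pos u) x).symm)
  have hsn : Summable (fun x => gradSq (fun y => t * neg u y) x) :=
    (hGn.mul_left (t ^ 2)).congr (fun x => (gradSq_smul t (neg u) x).symm)
  have hcs : Summable (fun x => s ^ 2 * gradSq (pos u) x - (s * t / 2) * Kx u x) :=
    (hGp.mul_left _).sub (hK.mul_left _)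
  have hcn : Summable (fun x => t ^ 2 * gradSq (neg u) x - (s * t / 2) * Kx u x) :=
    (hGn.mul_left _).sub (hK.mul_left _)
  have hKV : KV u = ∑' x : V, Kx u x := rfl
  refine ⟨hcs.congr (fun x => (hdp x).symm), hcn.congr (fun x => (hdn x).symm),
    hsp, hsn, hK, ?_, ?_⟩
  · rw [tsum_congr hdp, Summable.tsum_sub (hGp.mul_left _) (hK.mul_left _), tsum_mul_left,
      tsum_mul_left, tsum_congr (fun x => gradSq_smul s (pos u) x), tsum_mul_left, hKV]
  · rw [tsum_congr hdn, Summable.tsum_sub (hGn.mul_left _) (hK.mul_left _), tsum_mul_left,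
      tsum_mul_left, tsum_congr (fun x => gradSq_smul t (neg u) x), tsum_mul_left, hKV]


end DiscreteKirchhoff
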